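/- Let (X,Fₙ,*) be a generalized fuzzy n-metric space. Then for all x,y ∈ X and t > 0, Fₙ(x,y,y,…,y,t) ≥ [Fₙ(y,x,x,…,x, t/(n−1))]^{n−1}, where the power denotes the (n−1)-fold *-product when * is the product t-norm. -/

import Mathlib

/-!
Write `P k` for the point `(y, …, y, x, …, x)` with `k` leading copies of `y`, so that
`P 1 = (y, x, …, x)`. Applying (M5) to `P (k + 1)` with `a = x` gives
`F(P 1, s) · F(P k, r) ≤ F(P (k + 1), s + r)`, because replacing the first entry of `P (k + 1)`
by `x` yields a permutation of `P k`. Induction gives `F(P 1, s)^k ≤ F(P k, k s)`; take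
`k = n - 1`, `s = t / (n - 1)`, and note that `P (n - 1)` is a permutation of `(x, y, …, y)`.
-/

/-- A generalized fuzzy `n`-metric space structure (Khan), in the sense of
George and Veeramani: `star` is a continuous t-norm and `F` is a fuzzy set on
`Xⁿ × (0,∞)` satisfying axioms (M1)–(M6). -/
structure IsGenFuzzyNMetric {X : Type*} (n : ℕ) (hn : 3 ≤ n)
    (star : ℝ → ℝ → ℝ) (F : (Fin n → X) → ℝ → ℝ) : Prop where
  /-- `F` takes values in `[0,1]` -/
  mem : ∀ (x : Fin n → X) (t : ℝ), 0 < t → F x t ∈ Set.Icc (0:ℝ) 1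
  /-- (M1) `F(x₁,…,x₁,x₂,t) > 0` for `x₁ ≠ x₂` -/
  pos : ∀ (x y : X) (t : ℝ), 0 < t → x ≠ y →
    0 < F (fun i => if i.val = n - 1 then y else x) t
  /-- (M2) `F(x₁,…,x₁,x₂,t) ≥ F(x₁,…,xₙ,t)` when at least two of `x₂,…,xₙ` are distinct -/
  ge : ∀ (x : Fin n → X) (t : ℝ), 0 < t →
    (∃ i j : Fin n, i ≠ ⟨0, by omega⟩ ∧ j ≠ ⟨0, by omega⟩ ∧ x i ≠ x j) →
    F x t ≤ F (fun i => if i.val = n - 1 then x ⟨1, by omega⟩ else x ⟨0, by omega⟩) t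
  /-- (M3) `F(x₁,…,xₙ,t) = 1` iff all the points coincide -/
  eq_one_iff : ∀ (x : Fin n → X) (t : ℝ), 0 < t → (F x t = 1 ↔ ∀ i j, x i = x j)
  /-- (M4) permutation invariance -/
  perm : ∀ (x : Fin n → X) (σ : Equiv.Perm (Fin n)) (t : ℝ), 0 < t → F (x ∘ σ) t = F x t
  /-- (M5) `F(x₁,a,…,a,t) * F(a,x₂,…,xₙ,s) ≤ F(x₁,…,xₙ,t+s)` -/
  tri : ∀ (x : Fin n → X) (a : X) (t s : ℝ), 0 < t → 0 < s →
    star (F (fun i => if i.val = 0 then x ⟨0, by omega⟩ else a) t)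
         (F (Function.update x ⟨0, by omega⟩ a) s) ≤ F x (t + s)
  /-- (M6) continuity in `t` on `(0,∞)` -/
  cont : ∀ x : Fin n → X, ContinuousOn (F x) (Set.Ioi 0)

namespace IsGenFuzzyNMetric

variable {X : Type*} {n : ℕ}

def prefixVec (k : ℕ) (y x : X) : Fin n → X := fun i => if i.val < k then y else x

theorem prefixVec_one (y x : X) :
    (prefixVec 1 y x : Fin n → X) = fun i => if i.val = 0 then y else x := by
  funext i
  simp [prefixVec]

theorem update_prefixVec_succ (k : ℕ) (hk : k < n) (y x : X) :
    Function.update (prefixVec (k + 1) y x) ⟨0, by omega⟩ x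
      = prefixVec k y x ∘ Equiv.swap ⟨0, by omega⟩ ⟨k, hk⟩ := by
  funext i
  simp only [Function.update, prefixVec, Function.comp_apply, Equiv.swap_apply_def,
    apply_ite Fin.val, Fin.ext_iff, eq_rec_constant, dite_eq_ite]
  split_ifs <;> first | rfl | omega

theorem prefixVec_pred (h : 0 < n) (y x : X) :
    prefixVec (n - 1) y x
      = (fun i : Fin n => if i.val = 0 then x else y) ∘ Equiv.swap ⟨0, h⟩ ⟨n - 1, by omega⟩ := by
  funext i
  simp only [prefixVec, Function.comp_apply, Equiv.swap_apply_def, apply_ite Fin.val, Fin.ext_iff]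
  split_ifs <;> first | rfl | omega

variable {hn : 3 ≤ n} {F : (Fin n → X) → ℝ → ℝ}

theorem mul_le_prefixVec_succ (hF : IsGenFuzzyNMetric n hn (· * ·) F) {k : ℕ} (hk : k < n)
    (y x : X) {s r : ℝ} (hs : 0 < s) (hr : 0 < r) :
    F (prefixVec 1 y x) s * F (prefixVec k y x) r ≤ F (prefixVec (k + 1) y x) (s + r) := by
  have h := hF.tri (prefixVec (k + 1) y x) x s r hs hr
  rwa [update_prefixVec_succ k hk, hF.perm _ _ r hr, ← prefixVec_one] at h

theorem pow_le_prefixVec (hF : IsGenFuzzyNMetric n hn (· * ·) F) (y x : X) {s : ℝ} (hs : 0 < s)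
    {k : ℕ} (hk : 1 ≤ k) (hkn : k < n) :
    F (prefixVec 1 y x) s ^ k ≤ F (prefixVec k y x) (k * s) := by
  induction k, hk using Nat.le_induction with
  | base => simp
  | succ k hk ih =>
    have hks : 0 < (k : ℝ) * s := mul_pos (by exact_mod_cast hk) hs
    calc F (prefixVec 1 y x) s ^ (k + 1)
        = F (prefixVec 1 y x) s * F (prefixVec 1 y x) s ^ k := pow_succ' _ _
      _ ≤ F (prefixVec 1 y x) s * F (prefixVec k y x) (k * s) :=
        mul_le_mul_of_nonneg_left (ih (by omega)) (hF.mem _ s hs).1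
      _ ≤ F (prefixVec (k + 1) y x) (s + k * s) := hF.mul_le_prefixVec_succ (by omega) y x hs hks
      _ = F (prefixVec (k + 1) y x) ((k + 1 : ℕ) * s) := by push_cast; ring_nf

end IsGenFuzzyNMetric

open IsGenFuzzyNMetric in
/-- in a generalized fuzzy `n`-metric space with the product t-norm,
`Fₙ(x,y,…,y,t) ≥ [Fₙ(y,x,…,x,t/(n−1))]^{n−1}`. -/
theorem stmt4 {X : Type*} (n : ℕ) (hn : 3 ≤ n) (F : (Fin n → X) → ℝ → ℝ)
    (hF : IsGenFuzzyNMetric n hn (fun a b => a * b) F)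
    (x y : X) (t : ℝ) (ht : 0 < t) :
    (F (fun i => if i.val = 0 then y else x) (t / ((n : ℝ) - 1))) ^ (n - 1)
      ≤ F (fun i => if i.val = 0 then x else y) t := by
  have hn1 : ((n - 1 : ℕ) : ℝ) = n - 1 := by
    rw [Nat.cast_sub (by omega), Nat.cast_one]
  have hpos : (0 : ℝ) < n - 1 := by
    rw [← hn1]; exact_mod_cast (by omega : 0 < n - 1)
  have h := hF.pow_le_prefixVec y x (div_pos ht hpos) (k := n - 1) (by omega) (by omega)
  rwa [hn1, mul_div_cancel₀ t hpos.ne', prefixVec_one, prefixVec_pred (by omega),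
    hF.perm _ _ t ht] at h
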